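/- With F_n and h as above (h strictly decreasing, a > 0), define B_l = F_{l+1}(h⁻¹(T^{l+1})) − T^{[l]} for 0 ≤ l ≤ N−2, where T¹ ≥ T² ≥ … ≥ T^{N−1} > 0. Then B_l ≥ B_{l+1} for all admissible l, and B_l = B_{l+1} if and only if T^{l+1} = T^{l+2}. -/

import Mathlib

/-!
The sums telescope: since `h (h⁻¹ (T^{l+1})) = T^{l+1}`, the difference `B l - B (l + 1)` is
`F_{l+2} x - F_{l+2} y` with `x = h⁻¹ (T^{l+1})` and `y = h⁻¹ (T^{l+2})`. On `[0, M]` each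
`F_n` with `n > 0` is strictly decreasing (a product of two nonnegative decreasing factors plus a
positive multiple of `h`), and `h⁻¹` reverses the order `T^{l+2} ≤ T^{l+1}`, so `x ≤ y` with
equality exactly when `T^{l+1} = T^{l+2}`.
-/

open Set

theorem antitoneOn_sub_mul_one_add {M : ℝ} {a : ℝ → ℝ} {s : Set ℝ} (hs : s ⊆ Iic M)
    (ha : ∀ t ∈ s, -1 ≤ a t) (ha_anti : AntitoneOn a s) :
    AntitoneOn (fun t => (M - t) * (1 + a t)) s := fun u hu v hv huv =>
  mul_le_mul (by linarith) (by linarith [ha_anti hu hv huv]) (by linarith [ha v hv])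
    (by linarith [mem_Iic.1 (hs hu)])

theorem strictAntiOn_sub_mul_one_add_add_mul {M c : ℝ} {a h : ℝ → ℝ} {s : Set ℝ}
    (hs : s ⊆ Iic M) (ha : ∀ t ∈ s, -1 ≤ a t) (ha_anti : AntitoneOn a s)
    (hh : StrictAntiOn h s) (hc : 0 < c) :
    StrictAntiOn (fun t => (M - t) * (1 + a t) + c * h t) s :=
  AntitoneOn.add_strictAnti (antitoneOn_sub_mul_one_add hs ha ha_anti)
    fun _ hu _ hv huv => mul_lt_mul_of_pos_left (hh hu hv huv) hc

theorem threshold_B_antitone_general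
    (h a hinv : ℝ → ℝ) (M : ℝ) (N : ℕ) (T : ℕ → ℝ)
    (hh : StrictAntiOn h (Set.Icc 0 M))
    (ha_pos : ∀ t ∈ Set.Icc 0 M, 0 < a t)
    (ha_anti : AntitoneOn a (Set.Icc 0 M))
    (hT_mono : ∀ i j, 1 ≤ i → i ≤ j → j ≤ N - 1 → T j ≤ T i)
    (hinv_mem : ∀ i, 1 ≤ i → i ≤ N - 1 → hinv (T i) ∈ Set.Icc 0 M)
    (hinv_eq : ∀ i, 1 ≤ i → i ≤ N - 1 → h (hinv (T i)) = T i)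
    (F : ℕ → ℝ → ℝ)
    (hF : ∀ n t, F n t = (M - t) * (1 + a t) + (n : ℝ) * h t)
    (S : ℕ → ℝ) (hS : ∀ l, S l = ∑ i ∈ Finset.Icc 1 l, T i)
    (B : ℕ → ℝ) (hB : ∀ l, B l = F (l + 1) (hinv (T (l + 1))) - S l)
    (l : ℕ) (hl : l + 1 ≤ N - 2) :
    B (l + 1) ≤ B l ∧ (B l = B (l + 1) ↔ T (l + 1) = T (l + 2)) := by
  have hx := hinv_mem (l + 1) (by omega) (by omega)
  have hy := hinv_mem (l + 2) (by omega) (by omega)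
  have hhx := hinv_eq (l + 1) (by omega) (by omega)
  have hhy := hinv_eq (l + 2) (by omega) (by omega)
  have hF_anti : StrictAntiOn (F (l + 2)) (Icc 0 M) := by
    rw [funext (hF (l + 2))]
    exact strictAntiOn_sub_mul_one_add_add_mul (fun t ht => ht.2)
      (fun t ht => by linarith [ha_pos t ht]) ha_anti hh (by positivity)
  have hB_sub :
      B l - B (l + 1) = F (l + 2) (hinv (T (l + 1))) - F (l + 2) (hinv (T (l + 2))) := by
    rw [hB, hB, hS, hS, Finset.sum_Icc_succ_top (by omega), hF, hF, hF, hhx]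
    push_cast
    ring
  have hxy : hinv (T (l + 1)) ≤ hinv (T (l + 2)) := by
    rw [← hh.le_iff_ge hy hx, hhx, hhy]
    exact hT_mono _ _ (by omega) (by omega) (by omega)
  refine ⟨by linarith [(hF_anti.le_iff_ge hy hx).2 hxy], ?_⟩
  rw [← sub_eq_zero, hB_sub, sub_eq_zero, hF_anti.eq_iff_eq hx hy]
  exact ⟨fun e => hhx ▸ hhy ▸ congrArg h e.symm, fun e => by rw [e]⟩

/-- the thresholds B_l = F_{l+1}(h⁻¹(T^{l+1})) − T^[l] are non-increasing
in l, with equality iff T^{l+1} = T^{l+2}. -/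
theorem threshold_B_antitone
    (h a hinv : ℝ → ℝ) (M : ℝ) (hM : 0 < M) (N : ℕ) (T : ℕ → ℝ)
    (hh : StrictAntiOn h (Set.Icc 0 M))
    (ha_pos : ∀ t ∈ Set.Icc 0 M, 0 < a t)
    (ha_anti : AntitoneOn a (Set.Icc 0 M))
    (hT_pos : ∀ i, 1 ≤ i → i ≤ N - 1 → 0 < T i)
    (hT_mono : ∀ i j, 1 ≤ i → i ≤ j → j ≤ N - 1 → T j ≤ T i)
    (hinv_mem : ∀ i, 1 ≤ i → i ≤ N - 1 → hinv (T i) ∈ Set.Icc 0 M)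
    (hinv_eq : ∀ i, 1 ≤ i → i ≤ N - 1 → h (hinv (T i)) = T i)
    (F : ℕ → ℝ → ℝ)
    (hF : ∀ n t, F n t = (M - t) * (1 + a t) + (n : ℝ) * h t)
    (S : ℕ → ℝ) (hS : ∀ l, S l = ∑ i ∈ Finset.Icc 1 l, T i)
    (B : ℕ → ℝ) (hB : ∀ l, B l = F (l + 1) (hinv (T (l + 1))) - S l)
    (l : ℕ) (hl : l + 1 ≤ N - 2) :
    B (l + 1) ≤ B l ∧ (B l = B (l + 1) ↔ T (l + 1) = T (l + 2)) :=
  threshold_B_antitone_general h a hinv M N T hh ha_pos ha_anti hT_mono hinv_mem hinv_eq F hF S hS B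
    hB l hl
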